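/- Let G be a hereditarily non-topologizable group and let H be a subgroup of G. Then the abelianization H/[H,H] of H is finite. -/

import Mathlib

def NonTopologizable (G : Type*) [Group G] : Prop :=
  ∀ t : TopologicalSpace G, @IsTopologicalGroup G t _ → @T2Space G t → t = ⊥

def HereditarilyNonTopologizable (G : Type*) [Group G] : Prop :=
  ∀ (H : Subgroup G) (N : Subgroup ↥H) [N.Normal], NonTopologizable (↥H ⧸ N)

/-!
An infinite abelian group `A` always carries a non-discrete Hausdorff group topology, its Bohr
topology: characters `A → ℝ/ℤ` separate points, so `A` embeds into the compact group
`∏_χ ℝ/ℤ`. If the induced topology were discrete, the image of `A` would be a discrete, hence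
closed, hence compact subgroup of a compact group, so finite. The abelianization of `H` is the
quotient `H ⧸ [H, H]`, which is non-topologizable by hypothesis.
-/

open Topology

namespace AddCircle

noncomputable def ratCastHom : AddCircle (1 : ℚ) →+ AddCircle (1 : ℝ) :=
  QuotientAddGroup.map _ _ (Rat.castHom ℝ).toAddMonoidHom <| by
    rintro _ ⟨k, rfl⟩
    exact ⟨k, by simp⟩

theorem ratCastHom_injective : Function.Injective ratCastHom := by
  refine (injective_iff_map_eq_zero _).mpr fun x hx ↦ ?_
  induction x using QuotientAddGroup.induction_on with
  | H q =>
    change ((q : ℝ) : AddCircle (1 : ℝ)) = 0 at hx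
    obtain ⟨n, hn⟩ := (coe_eq_zero_iff (1 : ℝ)).mp hx
    refine (coe_eq_zero_iff (1 : ℚ)).mpr ⟨n, ?_⟩
    simp only [zsmul_eq_mul, mul_one] at hn ⊢
    exact_mod_cast hn

end AddCircle

theorem exists_addMonoidHom_addCircle_apply_ne_zero {A : Type*} [AddCommGroup A] {a : A}
    (ha : a ≠ 0) : ∃ χ : A →+ AddCircle (1 : ℝ), χ a ≠ 0 := by
  obtain ⟨c, hc⟩ := CharacterModule.exists_character_apply_ne_zero_of_ne_zero ha
  exact ⟨AddCircle.ratCastHom.comp c,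
    fun h ↦ hc (AddCircle.ratCastHom_injective (h.trans (map_zero _).symm))⟩

theorem exists_monoidHom_addCircle_apply_ne_one {A : Type*} [CommGroup A] {a : A}
    (ha : a ≠ 1) : ∃ χ : A →* Multiplicative (AddCircle (1 : ℝ)), χ a ≠ 1 := by
  obtain ⟨χ, hχ⟩ := exists_addMonoidHom_addCircle_apply_ne_zero (A := Additive A) ha
  exact ⟨AddMonoidHom.toMultiplicativeRight χ, hχ⟩

theorem NonTopologizable.finite_of_injective {G K : Type*} [Group G] [Group K]
    [TopologicalSpace K] [IsTopologicalGroup K] [CompactSpace K] [T2Space K]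
    (hG : NonTopologizable G) {f : G →* K} (hf : Function.Injective f) : Finite G := by
  let t : TopologicalSpace G := .induced f inferInstance
  have hemb : IsEmbedding f := ⟨⟨rfl⟩, hf⟩
  have : DiscreteTopology G := ⟨hG t (topologicalGroup_induced f) hemb.t2Space⟩
  have : DiscreteTopology f.range := hemb.toHomeomorph.discreteTopology_iff.mp this
  have hclosed : IsClosed (f.range : Set K) := Subgroup.isClosed_of_discrete
  exact (Set.finite_range_iff hf).mp
    (hclosed.isCompact.finite (isDiscrete_iff_discreteTopology.mpr this))

theorem NonTopologizable.finite_of_commGroup {A : Type*} [CommGroup A]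
    (hA : NonTopologizable A) : Finite A := by
  let bohr : A →* ((A →* Multiplicative (AddCircle (1 : ℝ))) →
      Multiplicative (AddCircle (1 : ℝ))) :=
    MonoidHom.pi fun χ ↦ χ
  refine hA.finite_of_injective (f := bohr) <| (injective_iff_map_eq_one _).mpr fun a ha ↦ ?_
  by_contra hne
  obtain ⟨χ, hχ⟩ := exists_monoidHom_addCircle_apply_ne_one hne
  exact hχ (congrFun ha χ)

theorem abelianization_finite {G : Type*} [Group G]
    (hG : HereditarilyNonTopologizable G) (H : Subgroup G) :
    Finite (Abelianization ↥H) :=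
  NonTopologizable.finite_of_commGroup (hG H (commutator H))
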